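/- As v → 0⁺, e(v; -Δ_{α,a}, -Δ) = (a/π)·(4π(α₀+α₁)a + 2)/(16π²α₀α₁a² - 1) + O(v), provided 16π²α₀α₁a² ≠ 1. -/

import Mathlib

/-!
Writing `g = N / D` for the first summand, the second summand is `g (-v)`, so
`e(v) = (a/π) (g v + g (-v))`. At `v = 0` the denominator is `D 0 = 16π²α₀α₁a² - 1 ≠ 0`,
hence `g` is differentiable at `0`, so is `e`, and `e v - e 0 = O(v)`; the constant is
`e 0 = (a/π) · 2 N 0 / D 0` with `N 0 = 2π(α₀+α₁)a + 1`.
-/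

open MeasureTheory Real Filter Set Asymptotics Topology

/-- The trace of the relative spectral measure `e(v; -Δ_{α,a}, -Δ)` for two delta
interactions in ℝ³. -/
noncomputable def relSpecMeasureTwoDelta (α₀ α₁ a : ℝ) (v : ℝ) : ℂ :=
  ((a : ℂ) / π) *
    ((2 * π * (α₀ + α₁) * a - Complex.I * a * v + Complex.exp (2 * Complex.I * a * v)) /
        ((a : ℂ) ^ 2 * (4 * π * α₀ - Complex.I * v) * (4 * π * α₁ - Complex.I * v) -
          Complex.exp (2 * Complex.I * a * v)) +
     (2 * π * (α₀ + α₁) * a + Complex.I * a * v + Complex.exp (-(2 * Complex.I * a * v))) /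
        ((a : ℂ) ^ 2 * (4 * π * α₀ + Complex.I * v) * (4 * π * α₁ + Complex.I * v) -
          Complex.exp (-(2 * Complex.I * a * v))))

namespace RelSpecMeasureTwoDelta

variable (α₀ α₁ a : ℝ)

noncomputable def num (v : ℝ) : ℂ :=
  2 * π * (α₀ + α₁) * a - Complex.I * a * v + Complex.exp (2 * Complex.I * a * v)

noncomputable def denom (v : ℝ) : ℂ :=
  (a : ℂ) ^ 2 * (4 * π * α₀ - Complex.I * v) * (4 * π * α₁ - Complex.I * v) -
    Complex.exp (2 * Complex.I * a * v)

theorem relSpecMeasureTwoDelta_eq_num_div_denom (v : ℝ) :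
    relSpecMeasureTwoDelta α₀ α₁ a v =
      (a : ℂ) / π * (num α₀ α₁ a v / denom α₀ α₁ a v + num α₀ α₁ a (-v) / denom α₀ α₁ a (-v)) := by
  simp only [relSpecMeasureTwoDelta, num, denom, Complex.ofReal_neg, mul_neg, sub_neg_eq_add]

theorem num_zero : num α₀ α₁ a 0 = ((2 * π * (α₀ + α₁) * a + 1 : ℝ) : ℂ) := by
  simp [num]

theorem denom_zero : denom α₀ α₁ a 0 = ((16 * π ^ 2 * α₀ * α₁ * a ^ 2 - 1 : ℝ) : ℂ) := by
  simp only [denom, Complex.ofReal_zero, mul_zero, sub_zero, Complex.exp_zero]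
  push_cast
  ring

theorem differentiable_num : Differentiable ℝ (num α₀ α₁ a) := by
  unfold num
  fun_prop

theorem differentiable_denom : Differentiable ℝ (denom α₀ α₁ a) := by
  unfold denom
  fun_prop

theorem relSpecMeasureTwoDelta_zero :
    relSpecMeasureTwoDelta α₀ α₁ a 0 =
      ((a / π * ((4 * π * (α₀ + α₁) * a + 2) / (16 * π ^ 2 * α₀ * α₁ * a ^ 2 - 1)) : ℝ) : ℂ) := by
  rw [relSpecMeasureTwoDelta_eq_num_div_denom, neg_zero, num_zero, denom_zero, ← add_div]
  push_cast
  ring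

variable {α₀ α₁ a}

theorem denom_zero_ne_zero (hα : 16 * π ^ 2 * α₀ * α₁ * a ^ 2 ≠ 1) : denom α₀ α₁ a 0 ≠ 0 := by
  rw [denom_zero]
  exact_mod_cast sub_ne_zero.mpr hα

theorem differentiableAt_relSpecMeasureTwoDelta_zero (hα : 16 * π ^ 2 * α₀ * α₁ * a ^ 2 ≠ 1) :
    DifferentiableAt ℝ (relSpecMeasureTwoDelta α₀ α₁ a) 0 := by
  have hg : DifferentiableAt ℝ (fun v => num α₀ α₁ a v / denom α₀ α₁ a v) 0 :=
    ((differentiable_num α₀ α₁ a) 0).div ((differentiable_denom α₀ α₁ a) 0)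
      (denom_zero_ne_zero hα)
  have hg_neg : DifferentiableAt ℝ (fun v => num α₀ α₁ a (-v) / denom α₀ α₁ a (-v)) 0 :=
    differentiableAt_comp_neg.mpr (by rwa [neg_zero (G := ℝ)])
  rw [funext (relSpecMeasureTwoDelta_eq_num_div_denom α₀ α₁ a)]
  exact (hg.add hg_neg).const_mul _

end RelSpecMeasureTwoDelta

open RelSpecMeasureTwoDelta in
theorem relSpecMeasureTwoDelta_asymptotic_zero_general (α₀ α₁ a : ℝ)
    (hα : 16 * π ^ 2 * α₀ * α₁ * a ^ 2 ≠ 1) :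
    (fun v : ℝ => relSpecMeasureTwoDelta α₀ α₁ a v -
        ((a / π * ((4 * π * (α₀ + α₁) * a + 2) / (16 * π ^ 2 * α₀ * α₁ * a ^ 2 - 1)) : ℝ) : ℂ))
      =O[𝓝[>] (0:ℝ)] fun v : ℝ => v := by
  rw [← relSpecMeasureTwoDelta_zero α₀ α₁ a]
  simpa using ((differentiableAt_relSpecMeasureTwoDelta_zero hα).isBigO_sub).mono nhdsWithin_le_nhds

/-- Small-`v` behaviour of the relative spectral measure of two delta interactions:
`e(v) = (a/π)(4π(α₀+α₁)a + 2)/(16π²α₀α₁a² - 1) + O(v)` as `v → 0⁺`, provided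
`16π²α₀α₁a² ≠ 1`. -/
theorem relSpecMeasureTwoDelta_asymptotic_zero (α₀ α₁ a : ℝ) (ha : 0 < a)
    (hα : 16 * π ^ 2 * α₀ * α₁ * a ^ 2 ≠ 1) :
    (fun v : ℝ => relSpecMeasureTwoDelta α₀ α₁ a v -
        ((a / π * ((4 * π * (α₀ + α₁) * a + 2) / (16 * π ^ 2 * α₀ * α₁ * a ^ 2 - 1)) : ℝ) : ℂ))
      =O[𝓝[>] (0:ℝ)] fun v : ℝ => v :=
  relSpecMeasureTwoDelta_asymptotic_zero_general α₀ α₁ a hα
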